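/- Let m ≥ 3 and let x_1, ..., x_m be reals with 0 ≤ x_i ≤ 1 and ∑_{i=1}^m x_i = 1. Then ∑_{i=1}^m (2/π)·arccos(1 − Δ_i) ≥ 2, where Δ_i := x_i + x_{i+1} − x_i x_{i+1} with indices taken modulo m. -/

import Mathlib

/-
Write `y i = 1 - x i`, so that `1 - Δ i = y i * y (i + 1)`. Concavity of `arccos` on `[0, 1]`
gives `arccos (c d) ≥ d arccos c + (1 - d) π / 2`; applying it both ways to each product and
summing cyclically, the coefficient of `arccos (y i)` is `y (i - 1) + y (i + 1) ≥ 1 + x i`,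
because three cyclically consecutive weights sum to at most `1` when `m ≥ 3`. This reduces the
claim to `∑ G (x i) ≥ π` for `G t = (1 + t) arccos (1 - t)` (`weightedArccos`). Since `G t / t`
decreases on `(0, 1/2]`, weights not exceeding `1/2` may be merged: if all are, `G t ≥ π t`;
otherwise the weights other than the largest one `s` merge into `1 - s`, and `G s + G (1 - s) ≥ π`
on `[0, 1]` (with equality at `s = 1/2` and `s = 1`) finishes the argument.
-/

open Real Set Function

lemma mul_sin_le_sin_mul {d θ : ℝ} (hd0 : 0 ≤ d) (hd1 : d ≤ 1) (hθ0 : 0 ≤ θ) (hθπ : θ ≤ π) :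
    d * sin θ ≤ sin (d * θ) := by
  simpa using strictConcaveOn_sin_Icc.concaveOn.2 (x := θ) (y := 0) ⟨hθ0, hθπ⟩
    ⟨le_rfl, pi_pos.le⟩ hd0 (sub_nonneg.2 hd1) (by ring)

lemma mul_arccos_add_le_arccos_mul {c d : ℝ} (hc0 : 0 ≤ c) (hc1 : c ≤ 1) (hd0 : 0 ≤ d)
    (hd1 : d ≤ 1) : d * arccos c + (1 - d) * (π / 2) ≤ arccos (c * d) := by
  have hθ0 : 0 ≤ arcsin c := arcsin_nonneg.2 hc0
  have hθ : arcsin c ≤ π / 2 := arcsin_le_pi_div_two c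
  have hsin : c * d ≤ sin (d * arcsin c) := by
    have := mul_sin_le_sin_mul hd0 hd1 hθ0 (by linarith [pi_pos])
    rwa [sin_arcsin (by linarith) hc1, mul_comm] at this
  have harcsin : arcsin (c * d) ≤ d * arcsin c := by
    have hdθ : d * arcsin c ≤ π / 2 := by nlinarith [pi_pos]
    have := monotone_arcsin hsin
    rwa [arcsin_sin (by nlinarith [pi_pos]) hdθ] at this
  rw [arccos_eq_pi_div_two_sub_arcsin, arccos_eq_pi_div_two_sub_arcsin]
  linarith

lemma pi_div_two_mul_one_sub_le_arccos {u : ℝ} (hu0 : 0 ≤ u) (hu1 : u ≤ 1) :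
    π / 2 * (1 - u) ≤ arccos u := by
  have := mul_arccos_add_le_arccos_mul zero_le_one le_rfl hu0 hu1
  rw [arccos_one, one_mul] at this
  linarith

lemma sqrt_two_mul_le_arccos_one_sub {t : ℝ} (ht0 : 0 ≤ t) (ht2 : t ≤ 2) :
    √(2 * t) ≤ arccos (1 - t) := by
  have hr2 : √(2 * t) ^ 2 = 2 * t := sq_sqrt (by linarith)
  have hrπ : √(2 * t) ≤ π := by nlinarith [pi_gt_three, sqrt_nonneg (2 * t)]
  calc √(2 * t) = arccos (cos √(2 * t)) := (arccos_cos (sqrt_nonneg _) hrπ).symm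
    _ ≤ arccos (1 - t) :=
      arccos_le_arccos (by nlinarith [one_sub_sq_div_two_le_cos (x := √(2 * t))])

lemma sub_le_arccos_sub_arccos_mul_sqrt {a b : ℝ} (ha0 : 0 ≤ a) (hab : a ≤ b) (hb1 : b ≤ 1) :
    b - a ≤ (arccos a - arccos b) * √(1 - a ^ 2) := by
  set A := arccos a
  set B := arccos b
  have hBA : B ≤ A := arccos_le_arccos hab
  have hB0 : 0 ≤ B := arccos_nonneg b
  have hA : A ≤ π / 2 := arccos_le_pi_div_two.2 ha0
  have hdiff : b - a = 2 * sin ((A + B) / 2) * sin ((A - B) / 2) := by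
    rw [← cos_arccos (by linarith) hb1, ← cos_arccos (by linarith) (hab.trans hb1), cos_sub_cos,
      show (B - A) / 2 = -((A - B) / 2) by ring, sin_neg, add_comm B]
    ring
  have hsin_half : sin ((A - B) / 2) ≤ (A - B) / 2 := sin_le (by linarith)
  have hsin_half0 : 0 ≤ sin ((A - B) / 2) := sin_nonneg_of_nonneg_of_le_pi (by linarith)
    (by linarith [pi_pos])
  have hsin_mid : sin ((A + B) / 2) ≤ sin A :=
    sin_le_sin_of_le_of_le_pi_div_two (by linarith [pi_pos]) hA (by linarith)
  have hsin_mid0 : 0 ≤ sin ((A + B) / 2) := sin_nonneg_of_nonneg_of_le_pi (by linarith)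
    (by linarith [pi_pos])
  calc b - a = 2 * sin ((A + B) / 2) * sin ((A - B) / 2) := hdiff
    _ ≤ 2 * sin A * ((A - B) / 2) := by gcongr; linarith
    _ = (A - B) * √(1 - a ^ 2) := by rw [sin_arccos]; ring

noncomputable def weightedArccos (t : ℝ) : ℝ := (1 + t) * arccos (1 - t)

lemma weightedArccos_nonneg {t : ℝ} (ht : 0 ≤ t) : 0 ≤ weightedArccos t :=
  mul_nonneg (by linarith) (arccos_nonneg _)

lemma weightedArccos_one_half : weightedArccos (1 / 2) = π / 2 := by
  have : arccos (1 / 2) = π / 3 := by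
    rw [← cos_pi_div_three, arccos_cos (by positivity) (by linarith [pi_pos])]
  rw [weightedArccos, show (1 : ℝ) - 1 / 2 = 1 / 2 by norm_num, this]
  ring

lemma hasDerivAt_weightedArccos {t : ℝ} (ht0 : 0 < t) (ht2 : t < 2) :
    HasDerivAt weightedArccos (arccos (1 - t) + (1 + t) / √(1 - (1 - t) ^ 2)) t := by
  have harccos : HasDerivAt (fun t => arccos (1 - t)) (1 / √(1 - (1 - t) ^ 2)) t := by
    simpa [comp_def] using (hasDerivAt_arccos (x := 1 - t) (by linarith) (by linarith)).comp
      t ((hasDerivAt_id t).const_sub 1)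
  exact (((hasDerivAt_id t).const_add 1).mul harccos).congr_deriv (by simp; ring)

lemma antitoneOn_weightedArccos_div :
    AntitoneOn (fun t => weightedArccos t / t) (Ioc 0 (1 / 2)) := by
  have hderiv : ∀ t ∈ Ioc (0 : ℝ) (1 / 2), HasDerivAt (fun t => weightedArccos t / t)
      ((t * (1 + t) / √(1 - (1 - t) ^ 2) - arccos (1 - t)) / t ^ 2) t := by
    intro t ht
    refine ((hasDerivAt_weightedArccos ht.1 (by linarith [ht.2])).div (hasDerivAt_id t)
      ht.1.ne').congr_deriv ?_
    simp only [weightedArccos, id]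
    ring
  apply antitoneOn_of_deriv_nonpos (convex_Ioc 0 (1 / 2))
  · exact fun t ht => (hderiv t ht).continuousAt.continuousWithinAt
  · exact fun t ht => (hderiv t (interior_subset ht)).differentiableAt.differentiableWithinAt
  intro t ht
  rw [interior_Ioc] at ht
  obtain ⟨ht0, ht1⟩ := ht
  rw [(hderiv t ⟨ht0, ht1.le⟩).deriv]
  refine div_nonpos_of_nonpos_of_nonneg ?_ (sq_nonneg t)
  have hsq : 1 - (1 - t) ^ 2 = t * (2 - t) := by ring
  have hsqrt_pos : 0 < √(1 - (1 - t) ^ 2) := sqrt_pos.2 (by nlinarith)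
  -- `t (1 + t) ≤ √(2t) · √(t (2 - t))` reduces to `t ^ 2 + 4 t ≤ 3`
  have hkey : t * (1 + t) / √(1 - (1 - t) ^ 2) ≤ √(2 * t) := by
    rw [div_le_iff₀ hsqrt_pos, hsq, ← sqrt_mul (by linarith)]
    apply le_sqrt_of_sq_le
    nlinarith [mul_nonneg (mul_pos ht0 ht0).le (show (0 : ℝ) ≤ 3 - 4 * t - t ^ 2 by nlinarith)]
  linarith [sqrt_two_mul_le_arccos_one_sub ht0.le (by linarith : t ≤ 2)]

lemma mul_weightedArccos_le_mul {t u : ℝ} (ht : 0 ≤ t) (htu : t ≤ u) (hu : u ≤ 1 / 2) :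
    t * weightedArccos u ≤ u * weightedArccos t := by
  rcases ht.eq_or_lt with rfl | ht
  · simp [weightedArccos]
  have hu0 : 0 < u := ht.trans_le htu
  have := antitoneOn_weightedArccos_div ⟨ht, htu.trans hu⟩ ⟨hu0, hu⟩ htu
  rw [div_le_div_iff₀ hu0 ht] at this
  linarith

lemma pi_mul_le_weightedArccos {t : ℝ} (ht0 : 0 ≤ t) (ht : t ≤ 1 / 2) :
    π * t ≤ weightedArccos t := by
  have := mul_weightedArccos_le_mul ht0 ht le_rfl
  rw [weightedArccos_one_half] at this
  linarith

lemma hasDerivAt_weightedArccos_add_one_sub {s : ℝ} (hs0 : 0 < s) (hs1 : s < 1) :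
    HasDerivAt (fun s => weightedArccos s + weightedArccos (1 - s))
      (arccos (1 - s) + (1 + s) / √(1 - (1 - s) ^ 2) - arccos s - (2 - s) / √(1 - s ^ 2)) s := by
  have h := (hasDerivAt_weightedArccos (t := 1 - s) (by linarith) (by linarith)).comp s
    ((hasDerivAt_id s).const_sub 1)
  refine ((hasDerivAt_weightedArccos hs0 (by linarith)).add h).congr_deriv ?_
  simp only [sub_sub_cancel]
  ring

lemma monotoneOn_weightedArccos_add_one_sub :
    MonotoneOn (fun s => weightedArccos s + weightedArccos (1 - s)) (Icc (1 / 2) (23 / 25)) := by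
  have hderiv : ∀ s ∈ Icc (1 / 2 : ℝ) (23 / 25), HasDerivAt _ _ s := fun s hs =>
    hasDerivAt_weightedArccos_add_one_sub (by linarith [hs.1]) (by linarith [hs.2])
  apply monotoneOn_of_deriv_nonneg (convex_Icc _ _)
  · exact fun s hs => (hderiv s hs).continuousAt.continuousWithinAt
  · exact fun s hs => (hderiv s (interior_subset hs)).differentiableAt.differentiableWithinAt
  intro s hs
  rw [interior_Icc] at hs
  obtain ⟨hs0, hs1⟩ := hs
  rw [(hderiv s ⟨hs0.le, hs1.le⟩).deriv]
  have ha_pos : 0 < √(1 - (1 - s) ^ 2) := sqrt_pos.2 (by nlinarith)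
  have hb_pos : 0 < √(1 - s ^ 2) := sqrt_pos.2 (by nlinarith)
  have hdiff : (2 * s - 1) / √(1 - (1 - s) ^ 2) ≤ arccos (1 - s) - arccos s := by
    rw [div_le_iff₀ ha_pos]
    linarith [sub_le_arccos_sub_arccos_mul_sqrt (a := 1 - s) (b := s) (by linarith) (by linarith)
      (by linarith)]
  -- squared, this is `(2 - s) ^ 3 ≤ 9 s (1 - s ^ 2)`, i.e. `(2 s - 1) (8 - 5 s - 4 s ^ 2) ≥ 0`
  have hcoef : (2 - s) / √(1 - s ^ 2) ≤ 3 * s / √(1 - (1 - s) ^ 2) := by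
    rw [div_le_div_iff₀ hb_pos ha_pos, ← pow_le_pow_iff_left₀ (mul_nonneg (by linarith) ha_pos.le)
      (mul_nonneg (by linarith) hb_pos.le) two_ne_zero, mul_pow, mul_pow,
      sq_sqrt (by nlinarith), sq_sqrt (by nlinarith)]
    have hfactor : 0 ≤ s * (2 * s - 1) * (8 - 5 * s - 4 * s ^ 2) :=
      mul_nonneg (mul_nonneg (by linarith) (by linarith)) (by nlinarith)
    nlinarith [hfactor]
  have : (2 * s - 1) / √(1 - (1 - s) ^ 2) + (1 + s) / √(1 - (1 - s) ^ 2)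
      = 3 * s / √(1 - (1 - s) ^ 2) := by ring
  linarith

lemma pi_le_weightedArccos_one_sub_add {ε : ℝ} (hε0 : 0 ≤ ε) (hε : ε ≤ 2 / 25) :
    π ≤ weightedArccos (1 - ε) + weightedArccos ε := by
  have hA := pi_div_two_mul_one_sub_le_arccos hε0 (by linarith)
  have hB := sqrt_two_mul_le_arccos_one_sub hε0 (by linarith)
  set r := √(2 * ε)
  have hr0 : 0 ≤ r := sqrt_nonneg _
  have hε_eq : ε = r ^ 2 / 2 := by rw [sq_sqrt (by linarith)]; ring
  have hr : r ≤ 2 / 5 := by nlinarith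
  have hbound : π ≤ (2 - ε) * (π / 2 * (1 - ε)) + (1 + ε) * r := by
    have h1 : 3 * π / 4 * r ≤ 1 := by nlinarith [pi_lt_d2]
    rw [hε_eq]
    nlinarith [mul_le_mul_of_nonneg_right h1 hr0, pow_nonneg hr0 3, pow_nonneg hr0 4, pi_pos]
  rw [weightedArccos, weightedArccos, sub_sub_cancel, show (1 : ℝ) + (1 - ε) = 2 - ε by ring]
  nlinarith [mul_le_mul_of_nonneg_left hA (by linarith : (0 : ℝ) ≤ 2 - ε),
    mul_le_mul_of_nonneg_left hB (by linarith : (0 : ℝ) ≤ 1 + ε)]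

lemma pi_le_weightedArccos_add_one_sub {s : ℝ} (hs0 : 0 ≤ s) (hs1 : s ≤ 1) :
    π ≤ weightedArccos s + weightedArccos (1 - s) := by
  wlog hs : 1 / 2 ≤ s generalizing s
  · simpa [add_comm] using this (s := 1 - s) (by linarith) (by linarith) (by linarith)
  rcases le_total s (23 / 25) with hs' | hs'
  · have := monotoneOn_weightedArccos_add_one_sub ⟨le_rfl, by norm_num⟩ ⟨hs, hs'⟩ hs
    norm_num [weightedArccos_one_half] at this ⊢
    linarith
  · simpa using pi_le_weightedArccos_one_sub_add (ε := 1 - s) (by linarith) (by linarith)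

lemma weightedArccos_le_sum_of_sum_eq {ι : Type*} {s : Finset ι} {x : ι → ℝ} {u : ℝ}
    (h0 : ∀ i ∈ s, 0 ≤ x i) (hle : ∀ i ∈ s, x i ≤ u) (hu : u ≤ 1 / 2)
    (hsum : ∑ i ∈ s, x i = u) : weightedArccos u ≤ ∑ i ∈ s, weightedArccos (x i) := by
  rcases (hsum ▸ Finset.sum_nonneg h0 : 0 ≤ u).eq_or_lt with rfl | hu0
  · simpa [weightedArccos] using Finset.sum_nonneg fun i hi => weightedArccos_nonneg (h0 i hi)
  refine le_of_mul_le_mul_left ?_ hu0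
  calc u * weightedArccos u = ∑ i ∈ s, x i * weightedArccos u := by rw [← Finset.sum_mul, hsum]
    _ ≤ ∑ i ∈ s, u * weightedArccos (x i) :=
      Finset.sum_le_sum fun i hi => mul_weightedArccos_le_mul (h0 i hi) (hle i hi) hu
    _ = u * ∑ i ∈ s, weightedArccos (x i) := (Finset.mul_sum _ _ _).symm

lemma pi_le_sum_weightedArccos {ι : Type*} {s : Finset ι} {x : ι → ℝ} (h0 : ∀ i ∈ s, 0 ≤ x i)
    (hsum : ∑ i ∈ s, x i = 1) : π ≤ ∑ i ∈ s, weightedArccos (x i) := by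
  classical
  have hs : s.Nonempty := Finset.nonempty_of_sum_ne_zero (by rw [hsum]; exact one_ne_zero)
  obtain ⟨k, hk, hmax⟩ := s.exists_max_image x hs
  rcases le_total (x k) (1 / 2) with hsmall | hlarge
  · calc π = ∑ i ∈ s, π * x i := by rw [← Finset.mul_sum, hsum, mul_one]
      _ ≤ _ := Finset.sum_le_sum fun i hi =>
        pi_mul_le_weightedArccos (h0 i hi) ((hmax i hi).trans hsmall)
  have hrest : ∑ i ∈ s.erase k, x i = 1 - x k := by
    rw [← hsum, ← Finset.sum_erase_add s x hk, add_sub_cancel_right]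
  have hle : ∀ i ∈ s.erase k, x i ≤ 1 - x k := fun i hi => by
    rw [← hrest]
    exact Finset.single_le_sum (fun j hj => h0 j (Finset.mem_of_mem_erase hj)) hi
  have hk1 : x k ≤ 1 := by
    linarith [hrest ▸ Finset.sum_nonneg fun i hi => h0 i (Finset.mem_of_mem_erase hi)]
  calc π ≤ weightedArccos (x k) + weightedArccos (1 - x k) :=
        pi_le_weightedArccos_add_one_sub (h0 k hk) hk1
    _ ≤ weightedArccos (x k) + ∑ i ∈ s.erase k, weightedArccos (x i) := by
        gcongr
        exact weightedArccos_le_sum_of_sum_eq (fun i hi => h0 i (Finset.mem_of_mem_erase hi)) hle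
          (by linarith) hrest
    _ = ∑ i ∈ s, weightedArccos (x i) := Finset.add_sum_erase s (fun i => weightedArccos (x i)) hk

lemma Function.Periodic.sum_range_add {M : Type*} [AddCommMonoid M] {f : ℕ → M} {m : ℕ}
    (hf : Periodic f m) (k : ℕ) : ∑ i ∈ Finset.range m, f (i + k) = ∑ i ∈ Finset.range m, f i := by
  induction k with
  | zero => rfl
  | succ k ih =>
    rw [← ih]
    cases m with
    | zero => rfl
    | succ n =>
      have hlast : f (n + (k + 1)) = f (0 + k) := by
        rw [← hf (0 + k)]; congr 1; ring
      rw [Finset.sum_range_succ, hlast, Finset.sum_range_succ']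
      simp only [add_right_comm _ 1 k, add_assoc]

lemma Function.Periodic.add_add_le_sum_range {x : ℕ → ℝ} {m : ℕ} (hx : Periodic x m)
    (hm : 3 ≤ m) (h0 : ∀ i, 0 ≤ x i) (i : ℕ) :
    x i + x (i + 1) + x (i + 2) ≤ ∑ j ∈ Finset.range m, x j := by
  rw [← hx.sum_range_add i]
  have hsub : {0, 1, 2} ⊆ Finset.range m := by
    intro j hj
    simp only [Finset.mem_insert, Finset.mem_singleton] at hj
    simp only [Finset.mem_range]
    omega
  calc x i + x (i + 1) + x (i + 2) = ∑ j ∈ {0, 1, 2}, x (j + i) := by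
        rw [Finset.sum_insert (by simp), Finset.sum_insert (by simp), Finset.sum_singleton]
        simp only [add_comm _ i, add_zero, add_assoc]
    _ ≤ ∑ j ∈ Finset.range m, x (j + i) :=
        Finset.sum_le_sum_of_subset_of_nonneg hsub fun j _ _ => h0 _

lemma pi_le_sum_arccos_mul_cyclic {m : ℕ} (hm : 3 ≤ m) {x : ℕ → ℝ} (hx : Periodic x m)
    (h0 : ∀ i, 0 ≤ x i) (h1 : ∀ i, x i ≤ 1) (hsum : ∑ i ∈ Finset.range m, x i = 1) :
    π ≤ ∑ i ∈ Finset.range m, arccos ((1 - x i) * (1 - x (i + 1))) := by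
  set A : ℕ → ℝ := fun i => arccos (1 - x i)
  have hy0 : ∀ i, 0 ≤ 1 - x i := fun i => sub_nonneg.2 (h1 i)
  have hy1 : ∀ i, 1 - x i ≤ 1 := fun i => sub_le_self 1 (h0 i)
  have hpair : ∀ i, (1 - x (i + 1)) * A i + (1 - x i) * A (i + 1) + π / 2 * (x i + x (i + 1))
      ≤ 2 * arccos ((1 - x i) * (1 - x (i + 1))) := fun i => by
    have h := mul_arccos_add_le_arccos_mul (hy0 i) (hy1 i) (hy0 (i + 1)) (hy1 (i + 1))
    have h' := mul_arccos_add_le_arccos_mul (hy0 (i + 1)) (hy1 (i + 1)) (hy0 i) (hy1 i)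
    rw [mul_comm (1 - x (i + 1))] at h'
    linarith
  have hcoef : ∀ i,
      weightedArccos (x (i + 1)) ≤ (1 - x (i + 2)) * A (i + 1) + (1 - x i) * A (i + 1) := by
    intro i
    rw [← add_mul, weightedArccos]
    exact mul_le_mul_of_nonneg_right (by linarith [hx.add_add_le_sum_range hm h0 i])
      (arccos_nonneg _)
  have hrot : ∑ i ∈ Finset.range m, (1 - x (i + 1)) * A i
      = ∑ i ∈ Finset.range m, (1 - x (i + 2)) * A (i + 1) := by
    have hper : Periodic (fun i => (1 - x (i + 1)) * A i) m := fun i => by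
      simp only [A, add_right_comm i m, hx _]
    exact (hper.sum_range_add 1).symm
  have hsum₁ : ∑ i ∈ Finset.range m, x (i + 1) = 1 := (hx.sum_range_add 1).trans hsum
  have hG : π ≤ ∑ i ∈ Finset.range m, weightedArccos (x (i + 1)) := by
    have hper : Periodic (fun i => weightedArccos (x i)) m := hx.comp weightedArccos
    rw [hper.sum_range_add 1]
    exact pi_le_sum_weightedArccos (fun i _ => h0 i) hsum
  have hsum_pair := Finset.sum_le_sum fun i (_ : i ∈ Finset.range m) => hpair i
  have hsum_coef := Finset.sum_le_sum fun i (_ : i ∈ Finset.range m) => hcoef i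
  simp only [Finset.sum_add_distrib, ← Finset.mul_sum] at hsum_pair hsum_coef
  rw [hsum, hsum₁] at hsum_pair
  linarith

/-- For `m ≥ 3`, cyclic `0 ≤ x i ≤ 1` with `∑ x i = 1`, setting
`Δ i = x i + x (i+1) - x i * x (i+1)`, one has `∑ (2/π) arccos (1 - Δ i) ≥ 2`. -/
theorem stmt8 (m : ℕ) (hm : 3 ≤ m) (x : ℕ → ℝ)
    (hper : ∀ i, x (i + m) = x i)
    (h0 : ∀ i, 0 ≤ x i) (h1 : ∀ i, x i ≤ 1)
    (hsum : ∑ i ∈ Finset.range m, x i = 1) :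
    2 ≤ ∑ i ∈ Finset.range m,
        (2 / Real.pi) * Real.arccos (1 - (x i + x (i + 1) - x i * x (i + 1))) := by
  have hfactor : ∀ i, 1 - (x i + x (i + 1) - x i * x (i + 1)) = (1 - x i) * (1 - x (i + 1)) :=
    fun i => by ring
  simp_rw [hfactor, ← Finset.mul_sum]
  calc (2 : ℝ) = 2 / π * π := (div_mul_cancel₀ 2 pi_ne_zero).symm
    _ ≤ _ := by gcongr; exact pi_le_sum_arccos_mul_cyclic hm hper h0 h1 hsum
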